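/- arXiv:math/0003126 — 5 statements merged into one kernel-verified Lean document; each statement's English description precedes it below -/
import Mathlib

section
/- For every natural number n ≥ 3 and every cardinality l with 2 ≤ l ≤ n−1, the number of l-element subsets of S³(n) whose points have pairwise distinct y-coordinates is strictly greater than the number of l-element subsets whose points have pairwise distinct x-coordinates. -/
/-!
The `l`-subsets of a finite set on which a map `g` is injective are obtained by choosing `l`
values of `g` and one point in the fiber over each, so they are counted by the `l`-th elementary
symmetric function `e_l` of the fiber sizes. In `S³(n)` the fiber over `x = u` has `C(n - u, 2)`
points and the fiber over `y = v` has `v (n - v)` points.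

Passing from `n` to `n + 1` adds one `x`-fiber of size `C(n + 1, 2) = 0 + 1 + ⋯ + n`. Spending this
reservoir by giving `v` more points to the `y`-fiber of size `v (n - v)`, for `v = 0, …, n`, turns
the old `y`-sizes into the new ones. Each such move takes from an entry at least as large as the
result of the receiving one, and `ab ≤ (a - d)(b + d)` for `b + d ≤ a` shows that it does not
decrease any `e_l`. This gives `e_l(x-sizes) ≤ e_l(y-sizes)` by induction on `n`, and strictness
for `2 ≤ l ≤ n - 1` propagates from the case `n = 3`, where the sizes are `{3, 1, 0, 0}` and
`{0, 2, 2, 0}`.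
-/

/-- The discrete simplex `S³(n) = {(x,y,z) ∈ ℕ³ : 0 ≤ x < y < z ≤ n}`. -/
def S3 (n : ℕ) : Finset (ℕ × ℕ × ℕ) :=
  (Finset.range (n+1) ×ˢ Finset.range (n+1) ×ˢ Finset.range (n+1)).filter
    (fun p => p.1 < p.2.1 ∧ p.2.1 < p.2.2)

open Finset

section InjectiveSubsets

variable {α β : Type*} [DecidableEq α] [DecidableEq β]

theorem card_filter_injOn_image_eq_prod (g : α → β) (U : Finset α) (T : Finset β) :
    #{A ∈ U.powerset | (∀ p ∈ A, ∀ q ∈ A, g p = g q → p = q) ∧ A.image g = T} =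
      ∏ v ∈ T, #{a ∈ U | g a = v} := by
  rw [← card_pi]
  symm
  refine card_bij (fun f _ => T.attach.image fun v => f v.1 v.2) ?_ ?_ ?_
  · intro f hf
    simp only [mem_pi, mem_filter] at hf
    simp only [mem_filter, mem_powerset]
    refine ⟨fun a ha => ?_, fun a ha b hb h => ?_, ?_⟩
    · obtain ⟨v, -, rfl⟩ := mem_image.mp ha
      exact (hf v.1 v.2).1
    · obtain ⟨⟨v, hv⟩, -, rfl⟩ := mem_image.mp ha
      obtain ⟨⟨w, hw⟩, -, rfl⟩ := mem_image.mp hb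
      obtain rfl : v = w := by rwa [(hf v hv).2, (hf w hw).2] at h
      rfl
    · ext v
      simp only [mem_image, mem_attach, true_and, Subtype.exists]
      refine ⟨?_, fun hv => ⟨_, ⟨v, hv, rfl⟩, (hf v hv).2⟩⟩
      rintro ⟨_, ⟨w, hw, rfl⟩, rfl⟩
      rwa [(hf w hw).2]
  · intro f hf f' hf' h
    simp only [mem_pi, mem_filter] at hf hf'
    funext v hv
    obtain ⟨⟨w, hw⟩, -, hw'⟩ := mem_image.mp (h ▸ mem_image_of_mem _ (mem_attach T ⟨v, hv⟩) :
      f v hv ∈ T.attach.image fun v => f' v.1 v.2)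
    obtain rfl : w = v := by rw [← (hf' w hw).2, hw', (hf v hv).2]
    exact hw'.symm
  · intro A hA
    simp only [mem_filter, mem_powerset] at hA
    obtain ⟨hAU, hinj, rfl⟩ := hA
    choose f hfA hfg using fun v (hv : v ∈ A.image g) => mem_image.mp hv
    refine ⟨f, mem_pi.mpr fun v hv => mem_filter.mpr ⟨hAU (hfA v hv), hfg v hv⟩, ?_⟩
    ext a
    rw [mem_image]
    refine ⟨fun ⟨v, _, hva⟩ => hva ▸ hfA v.1 v.2, fun ha => ?_⟩
    have hga := mem_image_of_mem g ha
    exact ⟨⟨g a, hga⟩, mem_attach _ _, hinj _ (hfA _ hga) _ ha (hfg _ hga)⟩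

theorem card_powersetCard_filter_injOn_eq_esymm (g : α → β) (U : Finset α) (V : Finset β)
    (hUV : Set.MapsTo g U V) (l : ℕ) :
    #{A ∈ U.powersetCard l | ∀ p ∈ A, ∀ q ∈ A, g p = g q → p = q} =
      (V.val.map fun v => #{a ∈ U | g a = v}).esymm l := by
  have hmaps : Set.MapsTo (fun A : Finset α => A.image g)
      (({A ∈ U.powersetCard l | ∀ p ∈ A, ∀ q ∈ A, g p = g q → p = q} : Finset (Finset α)) :
        Set (Finset α)) (V.powersetCard l) := by
    intro A hA
    rw [mem_coe, mem_filter, mem_powersetCard] at hA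
    rw [mem_coe, mem_powersetCard, card_image_of_injOn (fun p hp q hq => hA.2 p hp q hq)]
    exact ⟨image_subset_iff.mpr fun a ha => hUV (hA.1.1 ha), hA.1.2⟩
  rw [esymm_map_val, card_eq_sum_card_fiberwise hmaps]
  refine sum_congr rfl fun T hT => ?_
  rw [← card_filter_injOn_image_eq_prod, filter_filter]
  congr 1
  ext A
  rw [mem_powersetCard] at hT
  simp only [mem_filter, mem_powersetCard, mem_powerset]
  constructor
  · rintro ⟨⟨hAU, -⟩, hinj, hAT⟩
    exact ⟨hAU, hinj, hAT⟩
  · rintro ⟨hAU, hinj, rfl⟩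
    exact ⟨⟨hAU, by rw [← hT.2, card_image_of_injOn fun p hp q hq => hinj p hp q hq]⟩, hinj, rfl⟩

end InjectiveSubsets

namespace Multiset

theorem esymm_cons_succ {R : Type*} [CommSemiring R] (a : R) (s : Multiset R) (l : ℕ) :
    (a ::ₘ s).esymm (l + 1) = s.esymm (l + 1) + a * s.esymm l := by
  simp [esymm, powersetCard_cons, sum_map_mul_left]

theorem esymm_cons_le_esymm_cons (a : ℕ) {s t : Multiset ℕ} (h : ∀ j, s.esymm j ≤ t.esymm j) :
    ∀ l, (a ::ₘ s).esymm l ≤ (a ::ₘ t).esymm l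
  | 0 => by simp [esymm]
  | l + 1 => by
    rw [esymm_cons_succ, esymm_cons_succ]
    exact add_le_add (h _) (Nat.mul_le_mul_left a (h _))

theorem esymm_cons_cons_le_of_add_le {a b d : ℕ} (h : b + d ≤ a) (M : Multiset ℕ) :
    ∀ l, (a ::ₘ b ::ₘ M).esymm l ≤ ((a - d) ::ₘ (b + d) ::ₘ M).esymm l
  | 0 => by simp [esymm]
  | 1 => by simp [esymm]; omega
  | l + 2 => by
    have hexpand : ∀ x y, (x ::ₘ y ::ₘ M).esymm (l + 2) =
        M.esymm (l + 2) + (x + y) * M.esymm (l + 1) + x * y * M.esymm l := by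
      intro x y
      simp only [esymm_cons_succ]
      ring
    obtain ⟨c, rfl⟩ := Nat.exists_eq_add_of_le h
    rw [hexpand, hexpand, show b + d + c - d = b + c by omega,
      show b + c + (b + d) = b + d + c + b by omega]
    exact Nat.add_le_add_left (Nat.mul_le_mul_right _ (by nlinarith)) _

/-- Move `d j` from the first entry `r` to the entry `b j`, for `j = 0, …, k - 1` in turn; the
hypothesis says that each receiver ends up no larger than what the first entry had before the move. -/
theorem esymm_cons_map_range_le_of_transfers (b d : ℕ → ℕ) (r : ℕ) :
    ∀ k, (∀ j < k, b j + ∑ i ∈ Finset.range (j + 1), d i ≤ r) → ∀ l,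
      (r ::ₘ (range k).map b).esymm l ≤
        ((r - ∑ i ∈ Finset.range k, d i) ::ₘ (range k).map fun i => b i + d i).esymm l
  | 0, _, l => by simp
  | k + 1, h, l => by
    have ih := esymm_cons_map_range_le_of_transfers b d r k fun j hj => h j (by omega)
    have hk := h k (by omega)
    rw [Finset.sum_range_succ] at hk ⊢
    rw [range_succ, map_cons, map_cons, cons_swap]
    calc (b k ::ₘ r ::ₘ (range k).map b).esymm l
        ≤ (b k ::ₘ (r - ∑ i ∈ Finset.range k, d i) ::ₘ (range k).map fun i => b i + d i).esymm l :=
          esymm_cons_le_esymm_cons _ ih l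
      _ ≤ _ := by
          rw [cons_swap, ← Nat.sub_sub]
          exact esymm_cons_cons_le_of_add_le (by omega) _ l

theorem range_succ_eq_map (n : ℕ) : range (n + 1) = 0 ::ₘ (range n).map Nat.succ :=
  congrArg ((↑) : List ℕ → Multiset ℕ) List.range_succ_eq_map

end Multiset

-- Indexed by all coordinates `≤ n`; the empty fibers contribute zeros, which do not change `esymm`.
def xFiberSizes (n : ℕ) : Multiset ℕ := (Multiset.range (n + 1)).map fun u => (n - u).choose 2

def yFiberSizes (n : ℕ) : Multiset ℕ := (Multiset.range (n + 1)).map fun v => v * (n - v)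

theorem xFiberSizes_succ (n : ℕ) : xFiberSizes (n + 1) = (n + 1).choose 2 ::ₘ xFiberSizes n := by
  rw [xFiberSizes, Multiset.range_succ_eq_map, Multiset.map_cons, Multiset.map_map, Nat.sub_zero]
  congr 1
  exact Multiset.map_congr rfl fun u _ => by simp

theorem yFiberSizes_succ (n : ℕ) :
    yFiberSizes (n + 1) = 0 ::ₘ (Multiset.range (n + 1)).map fun v => v * (n - v) + v := by
  rw [yFiberSizes, Multiset.range_succ, Multiset.map_cons, Nat.sub_self, mul_zero]
  congr 1
  refine Multiset.map_congr rfl fun v hv => ?_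
  rw [Multiset.mem_range] at hv
  rw [show n + 1 - v = n - v + 1 by omega, mul_add_one]

theorem sum_range_succ_id_eq_choose_two (n : ℕ) : ∑ i ∈ range (n + 1), i = (n + 1).choose 2 := by
  rw [sum_range_id, Nat.choose_two_right]

theorem mul_sub_add_choose_two_le (j n : ℕ) (h : j ≤ n) :
    j * (n - j) + (j + 1).choose 2 ≤ (n + 1).choose 2 := by
  obtain ⟨t, rfl⟩ := Nat.exists_eq_add_of_le h
  have hj := Nat.add_one_mul_choose_eq j 1
  have hn := Nat.add_one_mul_choose_eq (j + t) 1
  rw [Nat.choose_one_right] at hj hn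
  rw [Nat.add_sub_cancel_left]
  nlinarith

theorem esymm_cons_yFiberSizes_le (n l : ℕ) :
    ((n + 1).choose 2 ::ₘ yFiberSizes n).esymm l ≤ (yFiberSizes (n + 1)).esymm l := by
  have h := Multiset.esymm_cons_map_range_le_of_transfers (fun v => v * (n - v)) (fun v => v)
    ((n + 1).choose 2) (n + 1) (fun j hj => by
      rw [sum_range_succ_id_eq_choose_two]
      exact mul_sub_add_choose_two_le j n (by omega)) l
  rwa [sum_range_succ_id_eq_choose_two, Nat.sub_self, ← yFiberSizes_succ] at h

theorem esymm_xFiberSizes_le (n l : ℕ) : (xFiberSizes n).esymm l ≤ (yFiberSizes n).esymm l := by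
  induction n generalizing l with
  | zero => rfl
  | succ n ih =>
    rw [xFiberSizes_succ]
    exact (Multiset.esymm_cons_le_esymm_cons _ ih l).trans (esymm_cons_yFiberSizes_le n l)

theorem esymm_xFiberSizes_lt {n l : ℕ} (hn : 3 ≤ n) (hl : 2 ≤ l) (hln : l ≤ n - 1) :
    (xFiberSizes n).esymm l < (yFiberSizes n).esymm l := by
  induction n, hn using Nat.le_induction generalizing l with
  | base =>
    obtain rfl : l = 2 := by omega
    decide
  | succ n hn ih =>
    obtain ⟨l, rfl⟩ := Nat.exists_eq_add_of_le' (by omega : 1 ≤ l)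
    refine lt_of_lt_of_le ?_ (esymm_cons_yFiberSizes_le n _)
    rw [xFiberSizes_succ, Multiset.esymm_cons_succ, Multiset.esymm_cons_succ]
    rcases Nat.lt_or_ge l (n - 1) with hl' | hl'
    · exact add_lt_add_of_lt_of_le (ih (by omega) (by omega))
        (Nat.mul_le_mul_left _ (esymm_xFiberSizes_le n l))
    · have hpos : 0 < (n + 1).choose 2 := Nat.choose_pos (by omega)
      exact add_lt_add_of_le_of_lt (esymm_xFiberSizes_le n _)
        (Nat.mul_lt_mul_of_pos_left (ih (by omega) (by omega)) hpos)

theorem mem_S3 {n : ℕ} {p : ℕ × ℕ × ℕ} : p ∈ S3 n ↔ p.1 < p.2.1 ∧ p.2.1 < p.2.2 ∧ p.2.2 ≤ n := by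
  simp only [S3, mem_filter, mem_product, mem_range]
  omega

theorem card_filter_fst_S3 (n u : ℕ) : #{p ∈ S3 n | p.1 = u} = (n - u).choose 2 := by
  have hfiber : {p ∈ S3 n | p.1 = u} =
      {q ∈ Ioc u n ×ˢ Ioc u n | q.1 < q.2}.image fun q => (u, q.1, q.2) := by
    ext ⟨x, y, z⟩
    simp only [mem_filter, mem_S3, mem_image, mem_product, mem_Ioc, Prod.mk.injEq, Prod.exists]
    constructor
    · rintro ⟨h, rfl⟩
      exact ⟨y, z, by omega⟩
    · rintro ⟨y, z, h, rfl, rfl, rfl⟩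
      omega
  rw [hfiber, card_image_of_injective _ fun q q' h => by simpa [Prod.ext_iff] using h,
    card_product_filter_lt, Nat.card_Ioc]

theorem card_filter_snd_S3 (n v : ℕ) : #{p ∈ S3 n | p.2.1 = v} = v * (n - v) := by
  have hfiber : {p ∈ S3 n | p.2.1 = v} = (range v ×ˢ Ioc v n).image fun q => (q.1, v, q.2) := by
    ext ⟨x, y, z⟩
    simp only [mem_filter, mem_S3, mem_image, mem_product, mem_range, mem_Ioc, Prod.mk.injEq,
      Prod.exists]
    constructor
    · rintro ⟨h, rfl⟩
      exact ⟨x, z, by omega⟩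
    · rintro ⟨x, z, h, rfl, rfl, rfl⟩
      omega
  rw [hfiber, card_image_of_injective _ fun q q' h => by simpa [Prod.ext_iff] using h,
    card_product, card_range, Nat.card_Ioc]

theorem card_injOn_fst_S3 (n l : ℕ) :
    #{A ∈ (S3 n).powersetCard l | ∀ p ∈ A, ∀ q ∈ A, p.1 = q.1 → p = q} =
      (xFiberSizes n).esymm l := by
  rw [card_powersetCard_filter_injOn_eq_esymm _ _ (range (n + 1))
    fun p hp => mem_range.mpr (by have := mem_S3.mp hp; omega)]
  simp only [range_val, card_filter_fst_S3, xFiberSizes]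

theorem card_injOn_snd_S3 (n l : ℕ) :
    #{A ∈ (S3 n).powersetCard l | ∀ p ∈ A, ∀ q ∈ A, p.2.1 = q.2.1 → p = q} =
      (yFiberSizes n).esymm l := by
  rw [card_powersetCard_filter_injOn_eq_esymm _ _ (range (n + 1))
    fun p hp => mem_range.mpr (by have := mem_S3.mp hp; omega)]
  simp only [range_val, card_filter_snd_S3, yFiberSizes]

/-- There are more `l`-element subsets of `S³(n)` with pairwise distinct `y`-coordinates
than with pairwise distinct `x`-coordinates. -/
theorem stmt0 (n l : ℕ) (hn : 3 ≤ n) (hl2 : 2 ≤ l) (hln : l ≤ n - 1) :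
    (((S3 n).powersetCard l).filter
        (fun A => ∀ p ∈ A, ∀ q ∈ A, p.1 = q.1 → p = q)).card <
    (((S3 n).powersetCard l).filter
        (fun A => ∀ p ∈ A, ∀ q ∈ A, p.2.1 = q.2.1 → p = q)).card := by
  rw [card_injOn_fst_S3, card_injOn_snd_S3]
  exact esymm_xFiberSizes_lt hn hl2 hln
end

section
/- For every n ≥ 1 and every l with 2 ≤ l ≤ n−1, the coefficient of t^l in ∏_{j=1}^{n-1} (1 + j(n−j)t) is strictly greater than the coefficient of t^l in ∏_{j=2}^{n} (1 + (j(j−1)/2)t). -/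
open Polynomial

/-- elementary symmetric function of a multiset of naturals -/
def esy (l : ℕ) (s : Multiset ℕ) : ℕ := ((s.powersetCard l).map Multiset.prod).sum

lemma esy_zero (s : Multiset ℕ) : esy 0 s = 1 := by
  simp [esy, Multiset.powersetCard_zero_left]

lemma esy_cons (l : ℕ) (a : ℕ) (s : Multiset ℕ) :
    esy (l+1) (a ::ₘ s) = esy (l+1) s + a * esy l s := by
  rw [esy, Multiset.powersetCard_cons, Multiset.map_add, Multiset.sum_add]
  congr 1
  rw [Multiset.map_map, esy]
  simp [Multiset.sum_map_mul_left]

lemma esy_eq_zero (l : ℕ) (s : Multiset ℕ) (h : Multiset.card s < l) : esy l s = 0 := by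
  rw [esy, Multiset.powersetCard_eq_empty _ h]
  simp

lemma esy_pos (s : Multiset ℕ) (l : ℕ) (hpos : ∀ x ∈ s, 0 < x) (hl : l ≤ Multiset.card s) :
    0 < esy l s := by
  induction s using Multiset.induction generalizing l with
  | empty =>
    have : l = 0 := by simpa using hl
    subst this; simp [esy_zero]
  | cons a t ih =>
    cases l with
    | zero => simp [esy_zero]
    | succ l =>
      rw [esy_cons]
      have ha : 0 < a := hpos a (Multiset.mem_cons_self a t)
      have ht : 0 < esy l t := ih l (fun x hx => hpos x (Multiset.mem_cons_of_mem hx))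
        (by simpa using hl)
      positivity

lemma coeff_prod_esy (m : Multiset ℕ) (l : ℕ) :
    ((m.map (fun a => 1 + C a * X : ℕ → Polynomial ℕ)).prod).coeff l = esy l m := by
  induction m using Multiset.induction generalizing l with
  | empty =>
    cases l with
    | zero => simp [esy_zero]
    | succ l => simp [coeff_one, esy_eq_zero (l+1) 0 (by simp)]
  | cons a t ih =>
    rw [Multiset.map_cons, Multiset.prod_cons, add_mul, one_mul, mul_assoc, coeff_add]
    cases l with
    | zero =>
      rw [coeff_C_mul, mul_coeff_zero, coeff_X_zero, zero_mul, mul_zero, add_zero, ih, esy_zero, esy_zero]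
    | succ l =>
      rw [coeff_C_mul, coeff_X_mul, ih, ih, esy_cons]

lemma esy_pair (l x y : ℕ) (s : Multiset ℕ) :
    esy (l+2) (x ::ₘ y ::ₘ s) = esy (l+2) s + (x+y) * esy (l+1) s + x*y * esy l s := by
  rw [esy_cons, esy_cons, esy_cons]; ring

lemma transfer_le (l x y x' y' : ℕ) (s : Multiset ℕ)
    (hs : x + y = x' + y') (hp : x*y ≤ x'*y') :
    esy l (x ::ₘ y ::ₘ s) ≤ esy l (x' ::ₘ y' ::ₘ s) := by
  match l with
  | 0 => simp [esy_zero]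
  | 1 =>
    rw [show (1:ℕ) = 0 + 1 from rfl, esy_cons, esy_cons, esy_cons, esy_cons]
    simp only [esy_zero, mul_one]
    omega
  | (l+2) =>
    rw [esy_pair, esy_pair, hs]
    exact Nat.add_le_add_left (Nat.mul_le_mul_right _ hp) _

lemma transfer_lt (l x y x' y' : ℕ) (s : Multiset ℕ)
    (hs : x + y = x' + y') (hp : x*y < x'*y') (hpos : 0 < esy l s) :
    esy (l+2) (x ::ₘ y ::ₘ s) < esy (l+2) (x' ::ₘ y' ::ₘ s) := by
  rw [esy_pair, esy_pair, hs]
  exact Nat.add_lt_add_left (Nat.mul_lt_mul_of_lt_of_le hp (le_refl _) hpos) _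

/-- the evolving big element -/
def Yv (n k : ℕ) : ℕ := ∑ j ∈ Finset.Icc (k+1) (n-1), j

/-- intermediate multisets in the transfer chain -/
def mk (n k : ℕ) : Multiset ℕ :=
  Yv n k ::ₘ ((Finset.Icc 1 k).val.map (fun j => j * (n - j))
    + (Finset.Icc (k+1) (n-2)).val.map (fun j => j * (n - 1 - j)))

lemma Yv_rec (n k : ℕ) (h : k + 1 ≤ n - 1) : Yv n k = (k+1) + Yv n (k+1) := by
  rw [Yv, Yv, Finset.Icc_eq_cons_Ioc h, Finset.sum_cons, ← Finset.Icc_add_one_left_eq_Ioc]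

lemma Yv_lb (n k : ℕ) (h : k + 1 ≤ n - 1) : (k+2) * (n - 1 - (k+1)) ≤ Yv n (k+1) := by
  have hcard : (Finset.Icc (k+2) (n-1)).card = n - 1 - (k+1) := by
    rw [Nat.card_Icc]; omega
  have := Finset.card_nsmul_le_sum (Finset.Icc (k+2) (n-1)) id (k+2)
    (fun x hx => (Finset.mem_Icc.mp hx).1)
  rw [hcard, smul_eq_mul] at this
  calc (k+2) * (n - 1 - (k+1)) = (n - 1 - (k+1)) * (k+2) := by ring
    _ ≤ Yv n (k+1) := this

lemma mk_step (n l k : ℕ) (h : k + 1 ≤ n - 2) : esy l (mk n k) ≤ esy l (mk n (k+1)) := by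
  have hn : 3 ≤ n := by omega
  have e1 : (Finset.Icc (k+1) (n-2)).val = (k+1) ::ₘ (Finset.Icc (k+2) (n-2)).val := by
    have h2 : Finset.Ioc (k+1) (n-2) = Finset.Icc (k+2) (n-2) := by
      ext x; simp only [Finset.mem_Ioc, Finset.mem_Icc]; omega
    rw [Finset.Icc_eq_cons_Ioc h, Finset.cons_val, h2]
  have e2 : (Finset.Icc 1 (k+1)).val = (k+1) ::ₘ (Finset.Icc 1 k).val := by
    rw [Finset.Icc_eq_cons_Ico (by omega), Finset.cons_val, Finset.Ico_add_one_right_eq_Icc]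
  have hYr : Yv n k = (k+1) + Yv n (k+1) := Yv_rec n k (by omega)
  have hylb : (k+1) * (n - 1 - (k+1)) ≤ Yv n (k+1) := by
    have := Yv_lb n k (by omega)
    nlinarith [this]
  rw [mk, mk, e1, e2, Multiset.map_cons, Multiset.map_cons,
    Multiset.add_cons, Multiset.cons_add]
  apply transfer_le
  · -- sums match
    have : (k+1) * (n - (k+1)) = (k+1) * (n - 1 - (k+1)) + (k+1) := by
      have : n - (k+1) = (n - 1 - (k+1)) + 1 := by omega
      rw [this, mul_add, mul_one]
    omega
  · -- products
    have hy' : (k+1) * (n - (k+1)) = (k+1) * (n - 1 - (k+1)) + (k+1) := by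
      have : n - (k+1) = (n - 1 - (k+1)) + 1 := by omega
      rw [this, mul_add, mul_one]
    set y := (k+1) * (n - 1 - (k+1)) with hy
    set Y := Yv n (k+1) with hY
    rw [hYr, hy']
    nlinarith [hylb]

lemma mk_chain (n l : ℕ) : ∀ k d, k + d ≤ n - 2 → esy l (mk n k) ≤ esy l (mk n (k+d)) := by
  intro k d
  induction d with
  | zero => intro _; rw [Nat.add_zero]
  | succ d ih =>
    intro hd
    calc esy l (mk n k) ≤ esy l (mk n (k+d)) := ih (by omega)
      _ ≤ esy l (mk n (k+d+1)) := mk_step n l (k+d) (by omega)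

def An (n : ℕ) : Multiset ℕ := (Finset.Icc 2 n).val.map (fun j => j * (j-1) / 2)
def Bn (n : ℕ) : Multiset ℕ := (Finset.Icc 1 (n-1)).val.map (fun j => j * (n - j))

lemma Yv_zero (n : ℕ) : Yv n 0 = n * (n-1) / 2 := by
  rcases Nat.eq_zero_or_pos n with h | h
  · subst h; rfl
  have hr : Finset.range n = insert 0 (Finset.Icc 1 (n-1)) := by
    ext x; simp [Finset.mem_Icc, Finset.mem_range]; omega
  have h0 : (0:ℕ) ∉ Finset.Icc 1 (n-1) := by simp
  have := Finset.sum_range_id n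
  rw [hr, Finset.sum_insert h0] at this
  simpa [Yv] using this

lemma mk_zero (n : ℕ) : mk n 0 = Yv n 0 ::ₘ Bn (n-1) := by
  rw [mk, Bn]
  have h0 : Finset.Icc 1 0 = ∅ := Finset.Icc_eq_empty (by omega)
  have h1 : n - 1 - 1 = n - 2 := by omega
  rw [h0, h1]
  simp

lemma mk_last (n : ℕ) (hn : 2 ≤ n) : mk n (n-2) = Bn n := by
  rw [mk, Bn]
  have h1 : Finset.Icc (n-2+1) (n-2) = ∅ := Finset.Icc_eq_empty (by omega)
  have h2 : (Finset.Icc 1 (n-1)).val = (n-1) ::ₘ (Finset.Icc 1 (n-2)).val := by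
    rw [Finset.Icc_eq_cons_Ico (by omega), Finset.cons_val]
    have : Finset.Ico 1 (n-1) = Finset.Icc 1 (n-2) := by
      ext x; simp only [Finset.mem_Ico, Finset.mem_Icc]; omega
    rw [this]
  have hY : Yv n (n-2) = n - 1 := by
    rw [Yv]
    have : n - 2 + 1 = n - 1 := by omega
    rw [this, Finset.Icc_self, Finset.sum_singleton]
  have hb : (n-1) * (n - (n-1)) = n - 1 := by
    have : n - (n-1) = 1 := by omega
    rw [this, mul_one]
  rw [h1, h2, Multiset.map_cons, hY, hb]
  simp

lemma An_succ (n : ℕ) (hn : 1 ≤ n) : An (n+1) = ((n+1) * n / 2) ::ₘ An n := by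
  rw [An, An]
  have h : (Finset.Icc 2 (n+1)).val = (n+1) ::ₘ (Finset.Icc 2 n).val := by
    rw [Finset.Icc_eq_cons_Ico (by omega), Finset.cons_val, Finset.Ico_add_one_right_eq_Icc]
  rw [h, Multiset.map_cons]
  norm_num

lemma An_le_mk0 (n l : ℕ) (hn : 1 ≤ n)
    (ih : ∀ l', esy l' (An n) ≤ esy l' (Bn n)) :
    esy l (An (n+1)) ≤ esy l (mk (n+1) 0) := by
  have hmk0 : mk (n+1) 0 = Yv (n+1) 0 ::ₘ Bn n := by
    rw [mk_zero, Nat.add_sub_cancel]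
  have hY0 : Yv (n+1) 0 = (n+1) * n / 2 := by
    rw [Yv_zero, Nat.add_sub_cancel]
  rw [An_succ n hn, hmk0, hY0]
  cases l with
  | zero => simp [esy_zero]
  | succ l =>
    rw [esy_cons, esy_cons]
    exact add_le_add (ih _) (Nat.mul_le_mul_left _ (ih _))

lemma W : ∀ n l, esy l (An n) ≤ esy l (Bn n) := by
  intro n
  induction n with
  | zero => intro l; exact le_rfl
  | succ n ih =>
    intro l
    rcases Nat.eq_zero_or_pos n with h | h
    · subst h
      have : An 1 = Bn 1 := by
        rw [An, Bn]
        have h1 : Finset.Icc 2 1 = ∅ := Finset.Icc_eq_empty (by omega)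
        have h2 : Finset.Icc 1 0 = ∅ := Finset.Icc_eq_empty (by omega)
        rw [h1, h2]; rfl
      rw [this]
    calc esy l (An (n+1)) ≤ esy l (mk (n+1) 0) := An_le_mk0 n l h ih
      _ ≤ esy l (mk (n+1) (0 + (n+1-2))) := mk_chain (n+1) l 0 (n+1-2) (by omega)
      _ = esy l (Bn (n+1)) := by rw [show 0 + (n+1-2) = n+1-2 by omega, mk_last (n+1) (by omega)]

lemma mk_strict (n l : ℕ) (hn : 3 ≤ n) (hl2 : 2 ≤ l) (hln : l ≤ n-1) :
    esy l (mk n 0) < esy l (mk n 1) := by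
  obtain ⟨l', rfl⟩ : ∃ l', l = l' + 2 := ⟨l - 2, by omega⟩
  have h0 : Finset.Icc 1 0 = ∅ := Finset.Icc_eq_empty (by omega)
  have h11 : n - 1 - 1 = n - 2 := by omega
  have e1 : (Finset.Icc 1 (n-2)).val = 1 ::ₘ (Finset.Icc 2 (n-2)).val := by
    rw [Finset.Icc_eq_cons_Ioc (by omega : (1:ℕ) ≤ n-2), Finset.cons_val]
    have : Finset.Ioc 1 (n-2) = Finset.Icc 2 (n-2) := by
      ext x; simp only [Finset.mem_Ioc, Finset.mem_Icc]; omega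
    rw [this]
  have hm0 : mk n 0 = Yv n 0 ::ₘ (n-2) ::ₘ (Finset.Icc 2 (n-2)).val.map (fun j => j*(n-1-j)) := by
    rw [mk, h0, e1]
    simp [h11]
  have hm1 : mk n 1 = Yv n 1 ::ₘ (n-1) ::ₘ (Finset.Icc 2 (n-2)).val.map (fun j => j*(n-1-j)) := by
    rw [mk, Finset.Icc_self, show (1:ℕ) + 1 = 2 from rfl]
    simp [Multiset.singleton_add]
  have hrec : Yv n 0 = 1 + Yv n 1 := by
    have := Yv_rec n 0 (by omega)
    simpa using this
  have hlb : 2 * (n - 2) ≤ Yv n 1 := by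
    have := Yv_lb n 0 (by omega)
    simpa [h11] using this
  rw [hm0, hm1]
  apply transfer_lt
  · omega
  · rw [hrec]
    have h2 : 1 ≤ n - 2 := by omega
    have h3 : n - 1 = (n-2) + 1 := by omega
    rw [h3]
    nlinarith [hlb, h2]
  · apply esy_pos
    · intro v hv
      obtain ⟨j, hj, rfl⟩ := Multiset.mem_map.mp hv
      rw [Finset.mem_val, Finset.mem_Icc] at hj
      have : 0 < n - 1 - j := by omega
      exact Nat.mul_pos (by omega) this
    · rw [Multiset.card_map]
      have : Multiset.card (Finset.Icc 2 (n-2)).val = (Finset.Icc 2 (n-2)).card := rfl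
      rw [this, Nat.card_Icc]
      omega

/-- For `2 ≤ l ≤ n-1`, the coefficient of `t^l` in `∏_{j=1}^{n-1} (1 + j(n-j)t)` is strictly
greater than the coefficient of `t^l` in `∏_{j=2}^{n} (1 + (j(j-1)/2) t)`. -/
theorem stmt1 (n l : ℕ) (hn : 1 ≤ n) (hl2 : 2 ≤ l) (hln : l ≤ n - 1) :
    (∏ j ∈ Finset.Icc 2 n, (1 + C (j * (j-1) / 2) * X : Polynomial ℕ)).coeff l <
    (∏ j ∈ Finset.Icc 1 (n-1), (1 + C (j * (n-j)) * X : Polynomial ℕ)).coeff l := by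
  have hn3 : 3 ≤ n := by omega
  have key : esy l (An n) < esy l (Bn n) := by
    obtain ⟨m, rfl⟩ : ∃ m, n = m + 1 := ⟨n-1, by omega⟩
    calc esy l (An (m+1)) ≤ esy l (mk (m+1) 0) := An_le_mk0 m l (by omega) (W m)
      _ < esy l (mk (m+1) 1) := mk_strict (m+1) l hn3 hl2 hln
      _ ≤ esy l (mk (m+1) (1 + (m+1-2-1))) := mk_chain (m+1) l 1 _ (by omega)
      _ = esy l (Bn (m+1)) := by
          rw [show 1 + (m+1-2-1) = m+1-2 by omega, mk_last (m+1) (by omega)]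
  have t1 : (∏ j ∈ Finset.Icc 2 n, (1 + C (j * (j-1) / 2) * X : Polynomial ℕ)).coeff l
      = esy l (An n) := by
    have h := coeff_prod_esy (An n) l
    rw [An, Multiset.map_map] at h
    rw [Finset.prod_eq_multiset_prod]
    simpa [Function.comp, An] using h
  have t2 : (∏ j ∈ Finset.Icc 1 (n-1), (1 + C (j * (n-j)) * X : Polynomial ℕ)).coeff l
      = esy l (Bn n) := by
    have h := coeff_prod_esy (Bn n) l
    rw [Bn, Multiset.map_map] at h
    rw [Finset.prod_eq_multiset_prod]
    simpa [Function.comp, Bn] using h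
  rw [t1, t2]
  exact key
end

section
/- Let f_n(ν) be defined by f_0 = 1 and (ν−n)f_n = Σ_{j=0}^{n−1} a_{jn} f_j, and suppose g_n(ν) is unipotently equivalent to f_n, i.e. g_n = f_n + (a ν-independent linear combination of f_1,…,f_{n−1}), where g satisfies the analogous recursion with coefficients b_{jn}. Then for every n, the residue of g_n at ν = n equals the residue of f_n at ν = n. -/
noncomputable def resAt (F : RatFunc ℚ) (ν₀ : ℚ) : ℚ :=
  RatFunc.eval (RingHom.id ℚ) ν₀ ((RatFunc.X - RatFunc.C ν₀) * F)

namespace AuxStmt5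

open Polynomial

/-- `F` has no pole at `t`: it can be written `p/q` with `q t ≠ 0`. -/
def Good (t : ℚ) (F : RatFunc ℚ) : Prop :=
  ∃ p q : ℚ[X], q.eval t ≠ 0 ∧
    F * algebraMap ℚ[X] (RatFunc ℚ) q = algebraMap ℚ[X] (RatFunc ℚ) p

lemma eval_good {t : ℚ} {F : RatFunc ℚ} {p q : ℚ[X]} (hq : q.eval t ≠ 0)
    (h : F * algebraMap ℚ[X] (RatFunc ℚ) q = algebraMap ℚ[X] (RatFunc ℚ) p) :
    RatFunc.eval (RingHom.id ℚ) t F = p.eval t / q.eval t := by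
  have hq0 : q ≠ 0 := fun h0 => hq (by simp [h0])
  have hqm : algebraMap ℚ[X] (RatFunc ℚ) q ≠ 0 := RatFunc.algebraMap_ne_zero hq0
  have hF : F = algebraMap ℚ[X] (RatFunc ℚ) p / algebraMap ℚ[X] (RatFunc ℚ) q := by
    rw [eq_div_iff hqm]; exact h
  have hdvd : F.denom ∣ q := (RatFunc.denom_dvd hq0).2 ⟨p, hF⟩
  have hdenom : F.denom.eval t ≠ 0 := by
    intro h0
    obtain ⟨r, hr⟩ := hdvd
    exact hq (by rw [hr]; simp [h0])
  have hdm : algebraMap ℚ[X] (RatFunc ℚ) F.denom ≠ 0 :=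
    RatFunc.algebraMap_ne_zero (RatFunc.denom_ne_zero F)
  have hnum : F.num * q = p * F.denom := by
    apply RatFunc.algebraMap_injective ℚ
    have h1 : algebraMap ℚ[X] (RatFunc ℚ) F.num = F * algebraMap ℚ[X] (RatFunc ℚ) F.denom := by
      exact ((eq_div_iff hdm).mp (RatFunc.num_div_denom F).symm).symm
    rw [map_mul, map_mul, h1, mul_right_comm, h]
  have heval : F.num.eval t * q.eval t = p.eval t * F.denom.eval t := by
    have := congrArg (Polynomial.eval t) hnum
    simpa using this
  have heq : RatFunc.eval (RingHom.id ℚ) t F = F.num.eval t / F.denom.eval t := by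
    rfl
  rw [heq, div_eq_div_iff hdenom hq]
  linarith [heval]

lemma good_res_zero {t : ℚ} {F : RatFunc ℚ} (hF : Good t F) :
    RatFunc.eval (RingHom.id ℚ) t ((RatFunc.X - RatFunc.C t) * F) = 0 := by
  obtain ⟨p, q, hq, h⟩ := hF
  have hX : (RatFunc.X - RatFunc.C t) = algebraMap ℚ[X] (RatFunc ℚ) (X - C t) := by
    simp [RatFunc.algebraMap_X, RatFunc.algebraMap_C]
  have h2 : ((RatFunc.X - RatFunc.C t) * F) * algebraMap ℚ[X] (RatFunc ℚ) q
      = algebraMap ℚ[X] (RatFunc ℚ) ((X - C t) * p) := by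
    rw [map_mul, ← hX, mul_assoc, h]
  rw [eval_good hq h2]
  simp

lemma good_add {t : ℚ} {F G : RatFunc ℚ} (hF : Good t F) (hG : Good t G) :
    Good t (F + G) := by
  obtain ⟨p, q, hq, h⟩ := hF
  obtain ⟨p', q', hq', h'⟩ := hG
  refine ⟨p * q' + p' * q, q * q', by simp [hq, hq'], ?_⟩
  rw [map_add, map_mul, map_mul, map_mul, ← h, ← h']
  ring

lemma good_mul {t : ℚ} {F G : RatFunc ℚ} (hF : Good t F) (hG : Good t G) :
    Good t (F * G) := by
  obtain ⟨p, q, hq, h⟩ := hF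
  obtain ⟨p', q', hq', h'⟩ := hG
  refine ⟨p * p', q * q', by simp [hq, hq'], ?_⟩
  rw [map_mul, map_mul, ← h, ← h']
  ring

lemma good_zero (t : ℚ) : Good t 0 := ⟨0, 1, by simp, by simp⟩

lemma good_one (t : ℚ) : Good t 1 := ⟨1, 1, by simp, by simp⟩

lemma good_C_mul {t : ℚ} (c : ℚ) {F : RatFunc ℚ} (hF : Good t F) :
    Good t (RatFunc.C c * F) := by
  obtain ⟨p, q, hq, h⟩ := hF
  refine ⟨C c * p, q, hq, ?_⟩
  rw [map_mul, mul_assoc, h, RatFunc.algebraMap_C]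

lemma good_sum {t : ℚ} {ι : Type*} (s : Finset ι) (F : ι → RatFunc ℚ)
    (h : ∀ i ∈ s, Good t (F i)) : Good t (∑ i ∈ s, F i) := by
  classical
  induction s using Finset.induction with
  | empty => simpa using good_zero t
  | @insert x s hx ih =>
    rw [Finset.sum_insert hx]
    exact good_add (h _ (Finset.mem_insert_self _ _))
      (ih fun i hi => h i (Finset.mem_insert_of_mem hi))

lemma eval_good_add {t : ℚ} {F G : RatFunc ℚ} (hF : Good t F) (hG : Good t G) :
    RatFunc.eval (RingHom.id ℚ) t (F + G)
      = RatFunc.eval (RingHom.id ℚ) t F + RatFunc.eval (RingHom.id ℚ) t G := by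
  obtain ⟨p, q, hq, h⟩ := hF
  obtain ⟨p', q', hq', h'⟩ := hG
  have hsum : (F + G) * algebraMap ℚ[X] (RatFunc ℚ) (q * q')
      = algebraMap ℚ[X] (RatFunc ℚ) (p * q' + p' * q) := by
    rw [map_add, map_mul, map_mul, map_mul, ← h, ← h']
    ring
  rw [eval_good hq h, eval_good hq' h', eval_good (by simp [hq, hq']) hsum]
  field_simp
  simp only [Polynomial.eval_mul, Polynomial.eval_add]
  ring

lemma eval_good_sum {t : ℚ} {ι : Type*} (s : Finset ι) (F : ι → RatFunc ℚ)
    (h : ∀ i ∈ s, Good t (F i)) :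
    RatFunc.eval (RingHom.id ℚ) t (∑ i ∈ s, F i)
      = ∑ i ∈ s, RatFunc.eval (RingHom.id ℚ) t (F i) := by
  classical
  induction s using Finset.induction with
  | empty => simp
  | @insert x s hx ih =>
    rw [Finset.sum_insert hx, Finset.sum_insert hx,
      eval_good_add (h _ (Finset.mem_insert_self _ _))
        (good_sum s F fun i hi => h i (Finset.mem_insert_of_mem hi)),
      ih fun i hi => h i (Finset.mem_insert_of_mem hi)]

end AuxStmt5

/-- If `f` and `g` are parameterized recursive sequences (with coefficient arrays `a`, `b`
respectively) that are unipotently equivalent, i.e. `gₙ = fₙ` plus a `ν`-independent linear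
combination of `f₁, …, f_{n-1}`, then their spectral residue sequences coincide. -/
theorem stmt5 (a b u : ℕ → ℕ → ℚ) (f g : ℕ → RatFunc ℚ)
    (hf0 : f 0 = 1)
    (hfrec : ∀ n : ℕ, 1 ≤ n →
      (RatFunc.X - RatFunc.C (n : ℚ)) * f n = ∑ j ∈ Finset.range n, RatFunc.C (a j n) * f j)
    (hg0 : g 0 = 1)
    (hgrec : ∀ n : ℕ, 1 ≤ n →
      (RatFunc.X - RatFunc.C (n : ℚ)) * g n = ∑ j ∈ Finset.range n, RatFunc.C (b j n) * g j)
    (huni : ∀ n : ℕ, 1 ≤ n →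
      g n = f n + ∑ j ∈ Finset.Icc 1 (n-1), RatFunc.C (u j n) * f j)
    (n : ℕ) (hn : 1 ≤ n) :
    resAt (g n) (n : ℚ) = resAt (f n) (n : ℚ) := by
  open AuxStmt5 Polynomial in
  set t : ℚ := (n : ℚ) with ht
  -- every f k with k < n has no pole at t
  have hgood : ∀ k, k < n → Good t (f k) := by
    intro k hk
    induction k using Nat.strong_induction_on with
    | _ k ih =>
      rcases Nat.eq_zero_or_pos k with rfl | hk1
      · rw [hf0]; exact good_one t
      · have hrec := hfrec k hk1
        have hXk : (RatFunc.X - RatFunc.C (k : ℚ))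
            = algebraMap ℚ[X] (RatFunc ℚ) (X - C (k : ℚ)) := by
          simp [RatFunc.algebraMap_X, RatFunc.algebraMap_C]
        have hsum : Good t (∑ j ∈ Finset.range k, RatFunc.C (a j k) * f j) :=
          good_sum _ _ fun j hj =>
            good_C_mul _ (ih j (Finset.mem_range.mp hj) (lt_trans (Finset.mem_range.mp hj) hk))
        obtain ⟨p, q, hq, h⟩ := hsum
        refine ⟨p, (X - C (k : ℚ)) * q, ?_, ?_⟩
        · have hne : t - (k : ℚ) ≠ 0 := by
            have : (k : ℚ) < (n : ℚ) := by exact_mod_cast hk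
            rw [ht]; intro h0; linarith
          simp only [Polynomial.eval_mul, Polynomial.eval_sub, Polynomial.eval_X,
            Polynomial.eval_C]
          exact mul_ne_zero hne hq
        · rw [map_mul, ← hXk, ← mul_assoc, mul_comm (f k), hrec, h]
  -- (X - C t) * f n is good
  have hfn : Good t ((RatFunc.X - RatFunc.C t) * f n) := by
    rw [ht, hfrec n hn]
    exact good_sum _ _ fun j hj => good_C_mul _ (hgood j (Finset.mem_range.mp hj))
  have hterms : ∀ j ∈ Finset.Icc 1 (n-1), Good t (RatFunc.C (u j n) * f j) := by
    intro j hj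
    obtain ⟨hj1, hj2⟩ := Finset.mem_Icc.mp hj
    exact good_C_mul _ (hgood j (lt_of_le_of_lt hj2 (Nat.pred_lt (Nat.one_le_iff_ne_zero.mp hn))))
  have hXg : Good t (RatFunc.X - RatFunc.C t) :=
    ⟨X - C t, 1, by simp, by simp [RatFunc.algebraMap_X, RatFunc.algebraMap_C]⟩
  have hterms2 : ∀ j ∈ Finset.Icc 1 (n-1),
      Good t ((RatFunc.X - RatFunc.C t) * (RatFunc.C (u j n) * f j)) :=
    fun j hj => good_mul hXg (hterms j hj)
  unfold resAt
  rw [huni n hn, mul_add, Finset.mul_sum,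
    eval_good_add hfn (good_sum _ _ hterms2), eval_good_sum _ _ hterms2,
    Finset.sum_congr rfl fun j hj => good_res_zero (hterms j hj)]
  simp
end

section
/- For every n ≥ 1, as polynomials in t: Σ_{𝐩=(p₁,…,p_l), |𝐩|=n} ((n−1)!/s_𝐩)·((n−1)!/s_{𝐩'})·(∏_i p_i)·t^l = ∏_{j=1}^{n} (t + j(j−1)), where the sum is over all compositions 𝐩 of n, s_𝐩 = ∏_{j=1}^{l−1}(p₁+⋯+p_j), and 𝐩' = (p_l,…,p₁) is the reversed composition. -/
/-!
Write `s_j` for the left partial sums of a composition and `w s = 1 / (s (n - s))`. Splitting off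
the last block shows that `F m = ∑_{|𝐩| = m} (∏ pᵢ) (∏_{j ≤ l} w s_j) x^l` satisfies
`F m = w m · x · ∑_{c < m} (m - c) F c`, so `g a = ∑_{c < a} (a - c) F c` solves
`a (n - a) Δ²g (a - 1) = x g a` with `g 0 = 0`, `g 1 = 1`, and the left-hand side of the theorem
is `((n-1)!)² x g n`. On the binomial basis `C(a, i+1)` the operator `a (n - a) Δ²` is triangular,
which yields `g a = ∑ᵢ C(a, i+1) ∏_{m=1}^{i} (x + m(m-1)) / (m (n - m))`. At `a = n` the `i`-th
term is `n ∏_{m ≤ i} (x + m(m-1)) / (i! (i+1)!)`, and these terms telescope to the product.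
-/

open Polynomial Finset

/-- `s_𝐩 = ∏_{j=1}^{l-1} s_j`, the product of the proper left partial sums of a composition. -/
def sProd {n : ℕ} (c : Composition n) : ℕ :=
  ∏ j ∈ Finset.range (c.length - 1), c.sizeUpTo (j+1)

/-- `s_{𝐩'}` for the reversed composition `𝐩' = (p_l,…,p₁)`: its proper left partial sums are
`n - s_j` for `j = 1,…,l-1`. -/
def sProdRev {n : ℕ} (c : Composition n) : ℕ :=
  ∏ j ∈ Finset.range (c.length - 1), (n - c.sizeUpTo (j+1))

theorem List.sum_dropLast_add_getLast {M : Type*} [AddMonoid M] {L : List M} (hL : L ≠ []) :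
    L.dropLast.sum + L.getLast hL = L.sum := by
  conv_rhs => rw [← List.dropLast_append_getLast hL]
  rw [List.sum_append, List.sum_singleton]

def compositionBlocks (m : ℕ) : Finset (List ℕ) :=
  univ.image fun c : Composition m => c.blocks

theorem mem_compositionBlocks {m : ℕ} {L : List ℕ} :
    L ∈ compositionBlocks m ↔ (∀ i ∈ L, 0 < i) ∧ L.sum = m := by
  refine ⟨fun hL => ?_, fun ⟨hpos, hsum⟩ => mem_image.2 ⟨⟨L, hpos _, hsum⟩, mem_univ _, rfl⟩⟩
  obtain ⟨c, -, rfl⟩ := mem_image.1 hL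
  exact ⟨fun i hi => c.blocks_pos hi, c.blocks_sum⟩

theorem ne_nil_of_mem_compositionBlocks {m : ℕ} (hm : 0 < m) {L : List ℕ}
    (hL : L ∈ compositionBlocks m) : L ≠ [] := by
  rintro rfl
  rw [mem_compositionBlocks, List.sum_nil] at hL
  omega

theorem sum_composition_eq_sum_compositionBlocks {M : Type*} [AddCommMonoid M] (m : ℕ)
    (Φ : List ℕ → M) : ∑ c : Composition m, Φ c.blocks = ∑ L ∈ compositionBlocks m, Φ L :=
  (sum_image fun _ _ _ _ h => Composition.ext h).symm

theorem compositionBlocks_zero : compositionBlocks 0 = {[]} := by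
  ext L
  simp only [mem_compositionBlocks, mem_singleton, List.sum_eq_zero_iff]
  refine ⟨fun ⟨hpos, hzero⟩ => List.eq_nil_iff_forall_not_mem.2 fun i hi => ?_, ?_⟩
  · exact (hpos i hi).ne' (hzero i hi)
  · rintro rfl
    simp

theorem sum_compositionBlocks_eq_sum_append {M : Type*} [AddCommMonoid M] {m : ℕ} (hm : 0 < m)
    (Φ : List ℕ → M) :
    ∑ L ∈ compositionBlocks m, Φ L
      = ∑ c ∈ range m, ∑ L ∈ compositionBlocks c, Φ (L ++ [m - c]) := by
  rw [← sum_sigma (range m) compositionBlocks fun p => Φ (p.2 ++ [m - p.1])]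
  symm
  refine sum_nbij' (fun p => p.2 ++ [m - p.1]) (fun L => ⟨L.dropLast.sum, L.dropLast⟩)
    ?_ ?_ ?_ ?_ fun _ _ => rfl
  · rintro ⟨c, L⟩ hL
    simp only [mem_sigma, mem_range, mem_compositionBlocks] at hL
    obtain ⟨hc, hpos, hsum⟩ := hL
    refine mem_compositionBlocks.2 ⟨fun i hi => ?_, by simp [hsum]; omega⟩
    rcases List.mem_append.1 hi with hi | hi
    · exact hpos i hi
    · simp only [List.mem_singleton] at hi
      omega
  · intro L hL
    have hne := ne_nil_of_mem_compositionBlocks hm hL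
    obtain ⟨hpos, hsum⟩ := mem_compositionBlocks.1 hL
    have hsplit := List.sum_dropLast_add_getLast hne
    have hlast := hpos _ (List.getLast_mem hne)
    simp only [mem_sigma, mem_range, mem_compositionBlocks]
    exact ⟨by omega, fun i hi => hpos i (List.dropLast_subset L hi), trivial⟩
  · rintro ⟨c, L⟩ hL
    simp only [mem_sigma, mem_compositionBlocks] at hL
    simp [hL.2.2]
  · intro L hL
    have hne := ne_nil_of_mem_compositionBlocks hm hL
    have hsplit := List.sum_dropLast_add_getLast hne
    rw [(mem_compositionBlocks.1 hL).2] at hsplit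
    conv_rhs => rw [← List.dropLast_append_getLast hne]
    simp only [List.append_cancel_left_eq, List.cons.injEq, and_true]
    omega

section WeightedCompositions

variable {R : Type*} [CommSemiring R] (w : ℕ → R) (x : R)

def partialSumProd (L : List ℕ) (k : ℕ) : R :=
  ∏ j ∈ range k, w (L.take (j + 1)).sum

theorem partialSumProd_append_singleton {L : List ℕ} {k : ℕ} (hk : k ≤ L.length) (a : ℕ) :
    partialSumProd w (L ++ [a]) k = partialSumProd w L k :=
  prod_congr rfl fun j hj => by
    rw [List.take_append_of_le_length (by have := mem_range.1 hj; omega)]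

theorem partialSumProd_length {L : List ℕ} (hL : L ≠ []) :
    partialSumProd w L L.length = partialSumProd w L (L.length - 1) * w L.sum := by
  obtain ⟨l, hl⟩ := Nat.exists_eq_add_one_of_ne_zero (List.length_pos_iff.2 hL).ne'
  rw [partialSumProd, partialSumProd, hl, prod_range_succ, Nat.add_sub_cancel, ← hl,
    List.take_length]

def weightedCompositionSum (m : ℕ) : R :=
  ∑ L ∈ compositionBlocks m,
    (L.map fun p : ℕ => (p : R)).prod * partialSumProd w L L.length * x ^ L.length

theorem weightedCompositionSum_zero : weightedCompositionSum w x 0 = 1 := by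
  simp [weightedCompositionSum, compositionBlocks_zero, partialSumProd]

theorem sum_compositionBlocks_partialSumProd_pred {m : ℕ} (hm : 0 < m) :
    ∑ L ∈ compositionBlocks m,
        (L.map fun p : ℕ => (p : R)).prod * partialSumProd w L (L.length - 1) * x ^ L.length
      = x * ∑ c ∈ range m, ((m - c : ℕ) : R) * weightedCompositionSum w x c := by
  rw [sum_compositionBlocks_eq_sum_append hm, mul_sum]
  refine sum_congr rfl fun c _ => ?_
  rw [weightedCompositionSum, mul_sum, mul_sum]
  refine sum_congr rfl fun L _ => ?_
  simp only [List.map_append, List.prod_append, List.map_cons, List.map_nil, List.prod_singleton,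
    List.length_append, List.length_singleton, Nat.add_sub_cancel,
    partialSumProd_append_singleton w le_rfl, pow_succ]
  ring

theorem weightedCompositionSum_of_pos {m : ℕ} (hm : 0 < m) :
    weightedCompositionSum w x m
      = w m * (x * ∑ c ∈ range m, ((m - c : ℕ) : R) * weightedCompositionSum w x c) := by
  rw [← sum_compositionBlocks_partialSumProd_pred w x hm, weightedCompositionSum, mul_sum]
  refine sum_congr rfl fun L hL => ?_
  rw [partialSumProd_length w (ne_nil_of_mem_compositionBlocks hm hL),
    (mem_compositionBlocks.1 hL).2]
  ring

end WeightedCompositions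

section SecondPartialSum

variable {R : Type*} [CommRing R] (u : ℕ → R)

def secondPartialSum (a : ℕ) : R :=
  ∑ c ∈ range a, ((a - c : ℕ) : R) * u c

theorem secondPartialSum_zero : secondPartialSum u 0 = 0 := by
  simp [secondPartialSum]

theorem secondPartialSum_one : secondPartialSum u 1 = u 0 := by
  simp [secondPartialSum]

theorem secondPartialSum_succ_sub (a : ℕ) :
    secondPartialSum u (a + 1) - secondPartialSum u a = ∑ c ∈ range (a + 1), u c := by
  have hsucc : ∀ c ∈ range (a + 1), ((a + 1 - c : ℕ) : R) * u c = ((a - c : ℕ) : R) * u c + u c :=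
    fun c hc => by
      rw [Nat.sub_add_comm (Nat.lt_succ_iff.1 (mem_range.1 hc)), Nat.cast_succ]
      ring
  rw [secondPartialSum, sum_congr rfl hsucc, sum_add_distrib, sum_range_succ _ a, secondPartialSum]
  simp

theorem secondPartialSum_second_difference (k : ℕ) :
    secondPartialSum u (k + 2) - 2 * secondPartialSum u (k + 1) + secondPartialSum u k
      = u (k + 1) := by
  have h₁ := secondPartialSum_succ_sub u (k + 1)
  have h₀ := secondPartialSum_succ_sub u k
  rw [sum_range_succ] at h₁
  linear_combination h₁ - h₀

end SecondPartialSum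

theorem secondPartialSum_weightedCompositionSum_second_difference {R : Type*} [CommRing R]
    (w : ℕ → R) (x : R) (k : ℕ) :
    secondPartialSum (weightedCompositionSum w x) (k + 2)
        - 2 * secondPartialSum (weightedCompositionSum w x) (k + 1)
        + secondPartialSum (weightedCompositionSum w x) k
      = w (k + 1) * x * secondPartialSum (weightedCompositionSum w x) (k + 1) := by
  rw [secondPartialSum_second_difference, weightedCompositionSum_of_pos w x k.succ_pos, mul_assoc,
    secondPartialSum]

theorem eq_of_second_difference_eq {R : Type*} [CommRing R] {u v r : ℕ → R} {N : ℕ}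
    (h₀ : u 0 = v 0) (h₁ : u 1 = v 1)
    (hu : ∀ k, k + 2 ≤ N → u (k + 2) - 2 * u (k + 1) + u k = r k * u (k + 1))
    (hv : ∀ k, k + 2 ≤ N → v (k + 2) - 2 * v (k + 1) + v k = r k * v (k + 1)) :
    ∀ a ≤ N, u a = v a := by
  intro a
  induction a using Nat.strong_induction_on with
  | _ a ih =>
    match a with
    | 0 => exact fun _ => h₀
    | 1 => exact fun _ => h₁
    | k + 2 =>
      intro hk
      linear_combination hu k hk - hv k hk + (2 + r k) * ih (k + 1) (by omega) (by omega)
        - ih k (by omega) (by omega)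

theorem choose_second_difference_mul {R : Type*} [CommRing R] (r : R) (k i : ℕ) :
    ((k : R) + 1) * (r - (k + 1))
        * (((k + 2).choose (i + 1) : R) - 2 * (k + 1).choose (i + 1) + k.choose (i + 1))
      = i * (r - i) * (k + 1).choose i - (i + 1) * i * (k + 1).choose (i + 1) := by
  rcases i with _ | j
  · simp only [Nat.zero_add, Nat.choose_one_right]
    push_cast
    ring
  · have p₂ : (k + 2).choose (j + 2) = (k + 1).choose (j + 1) + (k + 1).choose (j + 2) :=
      Nat.choose_succ_succ' (k + 1) (j + 1)
    have p₁ : (k + 1).choose (j + 2) = k.choose (j + 1) + k.choose (j + 2) :=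
      Nat.choose_succ_succ' k (j + 1)
    have p₀ : (k + 1).choose (j + 1) = k.choose j + k.choose (j + 1) := Nat.choose_succ_succ' k j
    have a₀ : (k + 1) * k.choose j = (k + 1).choose (j + 1) * (j + 1) :=
      Nat.add_one_mul_choose_eq k j
    have a₁ : (k + 2) * (k + 1).choose (j + 1) = (k + 2).choose (j + 2) * (j + 2) :=
      Nat.add_one_mul_choose_eq (k + 1) (j + 1)
    apply_fun (Nat.cast : ℕ → R) at p₂ p₁ p₀ a₀ a₁
    push_cast at p₂ p₁ p₀ a₀ a₁ ⊢
    linear_combination ((k + 1) * (r - k - 1) - (j + 1) * (j + 2)) * p₂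
      - (k + 1) * (r - k - 1) * p₁ + (k + 1) * (r - k - 1) * p₀ + (r - k - 1) * a₀ - (j + 1) * a₁

section ExplicitSolution

variable {K : Type*} [Field K] [CharZero K] (n : ℕ) (x : K)

def solutionCoeff (i : ℕ) : K :=
  ∏ m ∈ Icc 1 i, (x + m * (m - 1)) / (m * (n - m))

def explicitSolution (a : ℕ) : K :=
  ∑ i ∈ range n, (a.choose (i + 1) : K) * solutionCoeff n x i

theorem solutionCoeff_zero : solutionCoeff n x 0 = 1 := by
  simp [solutionCoeff]

theorem mul_solutionCoeff_succ {i : ℕ} (hi : i + 1 < n) :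
    ((i : K) + 1) * (n - (i + 1)) * solutionCoeff n x (i + 1)
      = (x + (i + 1) * i) * solutionCoeff n x i := by
  have hi₀ : (i : K) + 1 ≠ 0 := Nat.cast_add_one_ne_zero i
  have hi₁ : (n : K) - (i + 1) ≠ 0 := sub_ne_zero.2 (by exact_mod_cast hi.ne')
  rw [solutionCoeff, prod_Icc_succ_top (by omega), ← solutionCoeff]
  push_cast
  field_simp
  ring

theorem explicitSolution_zero : explicitSolution n x 0 = 0 := by
  simp [explicitSolution]

theorem explicitSolution_one (hn : 0 < n) : explicitSolution n x 1 = 1 := by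
  rw [explicitSolution, sum_eq_single_of_mem 0 (mem_range.2 hn), solutionCoeff_zero]
  · simp
  · intro i _ hi
    rw [Nat.choose_eq_zero_of_lt (by omega), Nat.cast_zero, zero_mul]

theorem explicitSolution_second_difference_mul {k : ℕ} (hk : k + 2 ≤ n) :
    ((k : K) + 1) * (n - (k + 1))
        * (explicitSolution n x (k + 2) - 2 * explicitSolution n x (k + 1)
          + explicitSolution n x k)
      = x * explicitSolution n x (k + 1) := by
  obtain ⟨N, rfl⟩ : ∃ N, n = N + 1 := ⟨n - 1, by omega⟩
  set e := solutionCoeff (N + 1) x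
  have hlast : ((k + 1).choose (N + 1) : K) = 0 := by
    rw [Nat.choose_eq_zero_of_lt (by omega), Nat.cast_zero]
  have hΔ : ((k : K) + 1) * ((N + 1 : ℕ) - (k + 1))
        * (explicitSolution (N + 1) x (k + 2) - 2 * explicitSolution (N + 1) x (k + 1)
          + explicitSolution (N + 1) x k)
      = ∑ i ∈ range (N + 1), (i * ((N + 1 : ℕ) - i) * (k + 1).choose i * e i
          - (i + 1) * i * ((k + 1).choose (i + 1) * e i)) := by
    simp only [explicitSolution, mul_sum, ← sum_sub_distrib, ← sum_add_distrib]
    refine sum_congr rfl fun i _ => ?_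
    linear_combination e i * choose_second_difference_mul ((N + 1 : ℕ) : K) k i
  have hshift : ∑ i ∈ range (N + 1), (i : K) * ((N + 1 : ℕ) - i) * (k + 1).choose i * e i
      = ∑ i ∈ range N, (x + (i + 1) * i) * ((k + 1).choose (i + 1) * e i) := by
    rw [sum_range_succ']
    simp only [Nat.cast_zero, zero_mul, add_zero]
    refine sum_congr rfl fun i hi => ?_
    have := mul_solutionCoeff_succ (N + 1) x (i := i) (by have := mem_range.1 hi; omega)
    push_cast at this ⊢
    linear_combination ((k + 1).choose (i + 1) : K) * this
  rw [hΔ, sum_sub_distrib, hshift, sum_range_succ _ N, hlast, explicitSolution, sum_range_succ,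
    hlast]
  simp only [mul_zero, zero_mul, add_zero]
  rw [← sum_sub_distrib, mul_sum]
  exact sum_congr rfl fun i _ => by ring

end ExplicitSolution

theorem cast_choose_succ_mul_factorial_mul_factorial {R : Type*} [CommRing R] (n i : ℕ) :
    (n.choose (i + 1) : R) * (i.factorial * (i + 1).factorial)
      = n * ∏ m ∈ Icc 1 i, ((m : R) * (n - m)) := by
  induction i with
  | zero => simp
  | succ i ih =>
    have hchoose : (n.choose (i + 2) : R) * (i + 2) = n.choose (i + 1) * (n - (i + 1)) := by
      by_cases hi : i + 1 ≤ n
      · have h : n.choose (i + 2) * (i + 2) = n.choose (i + 1) * (n - (i + 1)) :=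
          Nat.choose_succ_right_eq n (i + 1)
        have := congrArg (Nat.cast : ℕ → R) h
        push_cast [Nat.cast_sub hi] at this
        exact this
      · rw [Nat.choose_eq_zero_of_lt (by omega : n < i + 2),
          Nat.choose_eq_zero_of_lt (by omega : n < i + 1)]
        simp
    have hfact : ((i + 1).factorial : R) = (i + 1) * i.factorial := by
      push_cast [Nat.factorial_succ]
      ring
    rw [prod_Icc_succ_top (by omega), Nat.factorial_succ (i + 1)]
    push_cast at ih ⊢
    linear_combination ((i + 1).factorial : R) ^ 2 * hchoose
      + ((i + 1).factorial : R) * n.choose (i + 1) * (n - (i + 1)) * hfact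
      + (i + 1) * (n - (i + 1)) * ih

theorem mul_sum_prod_div_factorial_mul_factorial {K : Type*} [Field K] [CharZero K] (x : K)
    (k : ℕ) :
    x * ∑ i ∈ range (k + 1),
        (∏ m ∈ Icc 1 i, (x + m * (m - 1))) / (i.factorial * (i + 1).factorial)
      = (∏ m ∈ Icc 1 (k + 1), (x + m * (m - 1))) / (k.factorial * (k + 1).factorial) := by
  induction k with
  | zero => simp
  | succ k ih =>
    rw [sum_range_succ, mul_add, ih, prod_Icc_succ_top (by omega : 1 ≤ k + 2),
      Nat.factorial_succ (k + 1), Nat.factorial_succ k]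
    have hk : (k : K) + 1 + 1 ≠ 0 := by exact_mod_cast (k + 1).succ_ne_zero
    have hfact : (k.factorial : K) ≠ 0 := Nat.cast_ne_zero.2 k.factorial_ne_zero
    push_cast
    field_simp
    ring

theorem explicitSolution_self {K : Type*} [Field K] [CharZero K] {n : ℕ} (hn : 0 < n) (x : K) :
    ((n - 1).factorial : K) ^ 2 * (x * explicitSolution n x n)
      = ∏ j ∈ Icc 1 n, (x + j * (j - 1)) := by
  have hterm : ∀ i ∈ range n, (n.choose (i + 1) : K) * solutionCoeff n x i
      = n * ((∏ m ∈ Icc 1 i, (x + m * (m - 1))) / (i.factorial * (i + 1).factorial)) := by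
    intro i hi
    have hD : ∏ m ∈ Icc 1 i, ((m : K) * (n - m)) ≠ 0 :=
      prod_ne_zero_iff.2 fun m hm => by
        have := mem_Icc.1 hm
        have := mem_range.1 hi
        exact mul_ne_zero (by exact_mod_cast (show m ≠ 0 by omega))
          (sub_ne_zero.2 (by exact_mod_cast (show n ≠ m by omega)))
    have hF : (i.factorial : K) * (i + 1).factorial ≠ 0 := by
      exact_mod_cast (Nat.mul_ne_zero i.factorial_ne_zero (i + 1).factorial_ne_zero)
    rw [solutionCoeff, prod_div_distrib, ← mul_div_assoc, ← mul_div_assoc, div_eq_div_iff hD hF]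
    linear_combination (∏ m ∈ Icc 1 i, (x + m * (m - 1))) *
      cast_choose_succ_mul_factorial_mul_factorial (R := K) n i
  obtain ⟨N, rfl⟩ : ∃ N, n = N + 1 := ⟨n - 1, by omega⟩
  rw [explicitSolution, sum_congr rfl hterm, ← mul_sum, mul_left_comm x,
    mul_sum_prod_div_factorial_mul_factorial, Nat.add_sub_cancel, Nat.factorial_succ]
  have hfact : (N.factorial : K) ≠ 0 := Nat.cast_ne_zero.2 N.factorial_ne_zero
  push_cast
  field_simp

theorem secondPartialSum_weightedCompositionSum_eq_explicitSolution {K : Type*} [Field K]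
    [CharZero K] {n : ℕ} (hn : 0 < n) (x : K) {a : ℕ} (ha : a ≤ n) :
    secondPartialSum (weightedCompositionSum (fun m => ((m : K) * (n - m))⁻¹) x) a
      = explicitSolution n x a := by
  refine eq_of_second_difference_eq (r := fun k => ((k + 1 : ℕ) * (n - (k + 1 : ℕ)) : K)⁻¹ * x)
    ?_ ?_ (fun k _ => secondPartialSum_weightedCompositionSum_second_difference _ x k)
    (fun k hk => ?_) a ha
  · rw [secondPartialSum_zero, explicitSolution_zero]
  · rw [secondPartialSum_one, weightedCompositionSum_zero, explicitSolution_one n x hn]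
  · have hk₀ : (k : K) + 1 ≠ 0 := Nat.cast_add_one_ne_zero k
    have hk₁ : (n : K) - (k + 1) ≠ 0 := sub_ne_zero.2 (by exact_mod_cast (show n ≠ k + 1 by omega))
    have := explicitSolution_second_difference_mul n x hk
    push_cast
    field_simp
    linear_combination this

theorem factorial_div_sProd_mul_factorial_div_sProdRev {K : Type*} [Field K] {n : ℕ}
    (c : Composition n) :
    ((n - 1).factorial : K) / sProd c * ((n - 1).factorial / sProdRev c)
      = (n - 1).factorial ^ 2
        * partialSumProd (fun m => ((m : K) * (n - m))⁻¹) c.blocks (c.length - 1) := by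
  have hprod : (sProd c : K) * sProdRev c
      = ∏ j ∈ range (c.length - 1), ((c.sizeUpTo (j + 1) : K) * (n - c.sizeUpTo (j + 1))) := by
    rw [sProd, sProdRev, Nat.cast_prod, Nat.cast_prod, ← prod_mul_distrib]
    refine prod_congr rfl fun j _ => ?_
    rw [Nat.cast_sub (c.sizeUpTo_le _)]
  rw [div_mul_div_comm, hprod, partialSumProd, prod_inv_distrib, div_eq_mul_inv, sq]
  rfl

/-- With `L : List ℕ`, the left-hand side elaborates to `List.map id` of `L` coerced to `List ℚ`
through the list monad. -/
theorem map_coe_eq_map_cast (L : List ℕ) :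
    L.map (fun p => (p : ℚ)) = L.map fun p : ℕ => (p : ℚ) := by
  simp only [List.pure_def, List.bind_eq_flatMap, List.map_id_fun', id_eq, ← List.map_eq_flatMap]

/-- `Σ_{|𝐩|=n} ((n-1)!/s_𝐩)((n-1)!/s_{𝐩'}) (∏ᵢ pᵢ) t^l = ∏_{j=1}^{n} (t + j(j-1))`. -/
theorem stmt10 (n : ℕ) (hn : 1 ≤ n) :
    ∑ c : Composition n,
        C ((((n-1).factorial : ℚ) / (sProd c : ℚ)) * (((n-1).factorial : ℚ) / (sProdRev c : ℚ)) *
            (c.blocks.map (fun p => (p : ℚ))).prod) *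
          (X : Polynomial ℚ) ^ c.length
      = ∏ j ∈ Finset.Icc 1 n, ((X : Polynomial ℚ) + C ((j : ℚ) * ((j : ℚ) - 1))) := by
  refine Polynomial.funext fun x => ?_
  set w : ℕ → ℚ := fun m => ((m : ℚ) * (n - m))⁻¹
  simp only [eval_finsetSum, eval_mul, eval_C, eval_pow, eval_X, eval_prod, eval_add,
    factorial_div_sProd_mul_factorial_div_sProdRev, map_coe_eq_map_cast]
  calc ∑ c : Composition n, ((n - 1).factorial : ℚ) ^ 2 * partialSumProd w c.blocks (c.length - 1)
          * (c.blocks.map fun p : ℕ => (p : ℚ)).prod * x ^ c.length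
      = ((n - 1).factorial : ℚ) ^ 2 * ∑ L ∈ compositionBlocks n,
          (L.map fun p : ℕ => (p : ℚ)).prod * partialSumProd w L (L.length - 1) * x ^ L.length := by
        rw [mul_sum, ← sum_composition_eq_sum_compositionBlocks]
        exact sum_congr rfl fun c _ => by ring
    _ = ((n - 1).factorial : ℚ) ^ 2 * (x * explicitSolution n x n) := by
        rw [sum_compositionBlocks_partialSumProd_pred w x hn, ← secondPartialSum,
          secondPartialSum_weightedCompositionSum_eq_explicitSolution hn x le_rfl]
    _ = _ := explicitSolution_self hn x
end

section
/- Let 𝐩 be a composition of n and L_𝐩 its set of proper left partial sums. Then L_𝐩 is sparse (i.e., any two distinct elements differ by at least 2) if and only if the complementary composition 𝐪 of n — the unique composition with L_𝐪 = {1,…,n−1} \ L_𝐩 — has all parts in {1,2}. -/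
open Finset

/-- `L_𝐩`, the set of proper left partial sums of a composition. -/
def Lset {n : ℕ} (c : Composition n) : Finset ℕ :=
  (Finset.range (c.length - 1)).image (fun j => c.sizeUpTo (j+1))

/-- A set of naturals is sparse if any two distinct elements differ by at least 2. -/
def SparseSet (S : Finset ℕ) : Prop := ∀ a ∈ S, ∀ b ∈ S, a < b → a + 2 ≤ b

lemma mem_Lset {n : ℕ} (c : Composition n) {m : ℕ} :
    m ∈ Lset c ↔ ∃ i, 0 < i ∧ i < c.length ∧ m = c.sizeUpTo i := by
  simp only [Lset, Finset.mem_image, Finset.mem_range]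
  constructor
  · rintro ⟨j, hj, rfl⟩
    exact ⟨j + 1, Nat.succ_pos _, by omega, rfl⟩
  · rintro ⟨i, hi0, hil, rfl⟩
    exact ⟨i - 1, by omega, by rw [Nat.sub_add_cancel hi0]⟩

lemma Lset_subset {n : ℕ} (c : Composition n) : Lset c ⊆ Finset.Icc 1 (n - 1) := by
  intro m hm
  obtain ⟨i, hi0, hil, rfl⟩ := (mem_Lset c).1 hm
  have h1 : 0 < c.sizeUpTo i := by
    have := c.sizeUpTo_strict_mono (lt_of_le_of_lt hi0 hil)
    have := c.monotone_sizeUpTo hi0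
    simpa [c.sizeUpTo_zero] using lt_of_lt_of_le (by
      have h01 := c.sizeUpTo_strict_mono (show 0 < c.length by omega)
      simpa [c.sizeUpTo_zero] using h01) this
  have h2 : c.sizeUpTo i < n := by
    have hlt := c.sizeUpTo_strict_mono hil
    have hle := c.sizeUpTo_le (i + 1)
    omega
  simp only [Finset.mem_Icc]
  omega

/-- `L_𝐩` is sparse iff the complementary composition `𝐪` (the one with
`L_𝐪 = {1,…,n-1} \ L_𝐩`) has all parts in `{1,2}`. -/
theorem stmt14 (n : ℕ) (hn : 1 ≤ n) (c q : Composition n)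
    (hq : Lset q = Finset.Icc 1 (n-1) \ Lset c) :
    SparseSet (Lset c) ↔ ∀ p ∈ q.blocks, p = 1 ∨ p = 2 := by
  constructor
  · -- sparse → blocks ≤ 2
    intro hs p hp
    by_contra hcon
    push_neg at hcon
    have hp1 : 1 ≤ p := q.one_le_blocks hp
    have hp3 : 3 ≤ p := by omega
    obtain ⟨i, hil, hpi⟩ := List.mem_iff_getElem.1 hp
    rw [q.blocks_length] at hil
    set a := q.sizeUpTo i + 1 with ha
    have hsucc : q.sizeUpTo (i + 1) = q.sizeUpTo i + p := by
      rw [q.sizeUpTo_succ hil, hpi]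
    have hub : q.sizeUpTo (i + 1) ≤ n := q.sizeUpTo_le _
    -- a and a+1 are not in Lset q
    have hnotin : ∀ m, q.sizeUpTo i < m → m < q.sizeUpTo (i+1) → m ∉ Lset q := by
      intro m h1 h2 hm
      obtain ⟨j, hj0, hjl, rfl⟩ := (mem_Lset q).1 hm
      rcases le_or_gt j i with h | h
      · exact absurd (q.monotone_sizeUpTo h) (by omega)
      · exact absurd (q.monotone_sizeUpTo (show i + 1 ≤ j by omega)) (by omega)
    have haq : a ∉ Lset q := hnotin a (by omega) (by omega)
    have ha1q : a + 1 ∉ Lset q := hnotin (a+1) (by omega) (by omega)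
    have hicc : a ∈ Finset.Icc 1 (n-1) ∧ a + 1 ∈ Finset.Icc 1 (n-1) := by
      constructor <;> simp only [Finset.mem_Icc] <;> omega
    rw [hq] at haq ha1q
    simp only [Finset.mem_sdiff, not_and, not_not] at haq ha1q
    have hac := haq hicc.1
    have ha1c := ha1q hicc.2
    have := hs a hac (a+1) ha1c (by omega)
    omega
  · -- blocks ≤ 2 → sparse
    intro hb
    intro x hx y hy hxy
    by_contra hcon
    have hyx : y = x + 1 := by omega
    subst hyx
    have hxI := Lset_subset c hx
    have hyI := Lset_subset c hy
    simp only [Finset.mem_Icc] at hxI hyI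
    have hxq : x ∉ Lset q := by rw [hq]; simp [hx]
    have hyq : x + 1 ∉ Lset q := by rw [hq]; simp [hy]
    have hxn : x < n := by omega
    set i := (q.index ⟨x, hxn⟩ : ℕ) with hi
    have hil : i < q.length := (q.index ⟨x, hxn⟩).2
    have hle : q.sizeUpTo i ≤ x := q.sizeUpTo_index_le ⟨x, hxn⟩
    have hlt : x < q.sizeUpTo (i + 1) := q.lt_sizeUpTo_index_succ ⟨x, hxn⟩
    -- strict: sizeUpTo i < x
    have hlt1 : q.sizeUpTo i < x := by
      rcases lt_or_eq_of_le hle with h | h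
      · exact h
      · exfalso
        have hi0 : 0 < i := by
          rcases Nat.eq_zero_or_pos i with h0 | h0
          · rw [h0, q.sizeUpTo_zero] at h; omega
          · exact h0
        exact hxq ((mem_Lset q).2 ⟨i, hi0, hil, h.symm⟩)
    -- x+1 < sizeUpTo (i+1)
    have hlt2 : x + 2 ≤ q.sizeUpTo (i + 1) := by
      by_contra h
      have heq : q.sizeUpTo (i + 1) = x + 1 := by omega
      rcases lt_or_ge (i + 1) q.length with h2 | h2
      · exact hyq ((mem_Lset q).2 ⟨i + 1, by omega, h2, heq.symm⟩)
      · have := q.sizeUpTo_ofLength_le (i+1) h2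
        omega
    have hblk : q.blocks[i] ∈ q.blocks := by
      apply List.getElem_mem
    have := hb _ hblk
    have hsucc := q.sizeUpTo_succ hil
    omega
end
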